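/- arXiv:2509.11236 — 2 statements merged into one kernel-verified Lean document; each statement's English description precedes it below -/
import Mathlib

section
/- In a real inner product space, if p = (1−t)b + tc with t ∈ [0,1], then for any point a: ‖a−b‖² ≥ ‖p−b‖² + ‖p−a‖² − 2⟨b−p, a−p⟩, with equality; combining the analogous identity at c and eliminating the inner product terms yields ‖a−b‖²‖p−c‖ + ‖a−c‖²‖p−b‖ ≥ (‖p−a‖² + ‖p−b‖‖p−c‖)‖b−c‖. -/
open scoped RealInnerProductSpace

/-- Cosine-law identity at `b` and the resulting Stewart inequality in flat space. -/
theorem cosine_law_and_stewart_flat {E : Type*} [NormedAddCommGroup E] [InnerProductSpace ℝ E]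
    (a b c p : E) (t : ℝ) (ht0 : 0 ≤ t) (ht1 : t ≤ 1)
    (hp : p = (1 - t) • b + t • c) :
    (‖a - b‖ ^ 2 ≥ ‖p - b‖ ^ 2 + ‖p - a‖ ^ 2 - 2 * ⟪b - p, a - p⟫ ∧
      ‖a - b‖ ^ 2 = ‖p - b‖ ^ 2 + ‖p - a‖ ^ 2 - 2 * ⟪b - p, a - p⟫) ∧
    ‖a - b‖ ^ 2 * ‖p - c‖ + ‖a - c‖ ^ 2 * ‖p - b‖ ≥
      (‖p - a‖ ^ 2 + ‖p - b‖ * ‖p - c‖) * ‖b - c‖ := by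
  have key : ∀ x y : E, ‖x - y‖ ^ 2 = ‖x‖ ^ 2 - 2 * ⟪x, y⟫ + ‖y‖ ^ 2 := fun x y => by
    rw [← real_inner_self_eq_norm_sq, ← real_inner_self_eq_norm_sq, ← real_inner_self_eq_norm_sq,
      inner_sub_sub_self, real_inner_comm y x]
    ring
  have cos : ‖a - b‖ ^ 2 = ‖p - b‖ ^ 2 + ‖p - a‖ ^ 2 - 2 * ⟪b - p, a - p⟫ := by
    have h1 : a - b = (a - p) - (b - p) := by abel
    rw [h1, key, ← neg_sub p a, ← neg_sub p b, norm_neg, norm_neg, real_inner_comm]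
    ring
  refine ⟨⟨le_of_eq cos.symm, cos⟩, ?_⟩
  have hpb : p - b = t • (c - b) := by rw [hp]; module
  have hpc : p - c = (1 - t) • (b - c) := by rw [hp]; module
  have hnb : ‖p - b‖ = t * ‖b - c‖ := by
    rw [hpb, norm_smul, Real.norm_eq_abs, abs_of_nonneg ht0, ← neg_sub b c, norm_neg]
  have hnc : ‖p - c‖ = (1 - t) * ‖b - c‖ := by
    rw [hpc, norm_smul, Real.norm_eq_abs, abs_of_nonneg (by linarith)]
  have hpa : p - a = (1 - t) • (b - a) + t • (c - a) := by rw [hp]; module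
  have hkey : ‖p - a‖ ^ 2 = (1 - t) * ‖b - a‖ ^ 2 + t * ‖c - a‖ ^ 2
      - t * (1 - t) * ‖b - c‖ ^ 2 := by
    rw [hpa, ← real_inner_self_eq_norm_sq, ← real_inner_self_eq_norm_sq,
      ← real_inner_self_eq_norm_sq, ← real_inner_self_eq_norm_sq]
    simp only [real_inner_add_add_self, real_inner_smul_left, real_inner_smul_right,
      inner_sub_left, inner_sub_right, real_inner_comm b a, real_inner_comm c a, real_inner_comm c b,
      ]
    ring
  have hab : ‖a - b‖ = ‖b - a‖ := by rw [← neg_sub b a, norm_neg]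
  have hac : ‖a - c‖ = ‖c - a‖ := by rw [← neg_sub c a, norm_neg]
  rw [hnb, hnc, hab, hac, hkey]
  have hd : (0:ℝ) ≤ ‖b - c‖ := norm_nonneg _
  nlinarith [sq_nonneg ‖b - c‖]
end

section
/- Let f_t : ℝⁿ → ℝ be μ-strongly convex differentiable functions with ‖∇f_t(x)‖ ≤ L on a closed convex set X, and let x_{t+1} = proj_X(x_t − η_t ∇f_t(x_t)) with η_t = 1/(μ t). Then for any x* ∈ X, ∑_{t=1}^T (f_t(x_t) − f_t(x*)) ≤ (L²/(2μ)) (1 + log T). -/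
open scoped RealInnerProductSpace
open Finset

/-- Telescoping sum over `Icc 1 T`. -/
lemma ogd_telescope (b : ℕ → ℝ) (T : ℕ) :
    ∑ t ∈ Icc 1 T, (b t - b (t + 1)) = b 1 - b (T + 1) := by
  induction T with
  | zero => simp
  | succ T ih =>
    rcases Nat.eq_zero_or_pos T with hT | hT
    · subst hT; simp
    · rw [Finset.sum_Icc_succ_top (by omega : 1 ≤ T + 1), ih]; ring

/-- Harmonic sum bound. -/
lemma ogd_harmonic (T : ℕ) : ∑ t ∈ Icc 1 T, ((t : ℝ))⁻¹ ≤ 1 + Real.log T := by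
  have h := harmonic_le_one_add_log T
  rw [harmonic_eq_sum_Icc] at h
  have : ((∑ i ∈ Icc 1 T, ((i : ℚ))⁻¹ : ℚ) : ℝ) = ∑ t ∈ Icc 1 T, ((t : ℝ))⁻¹ := by
    push_cast; rfl
  calc ∑ t ∈ Icc 1 T, ((t : ℝ))⁻¹ = ((∑ i ∈ Icc 1 T, ((i : ℚ))⁻¹ : ℚ) : ℝ) := this.symm
    _ ≤ 1 + Real.log T := by exact_mod_cast h

/-- Logarithmic regret for projected online gradient descent with step sizes
`η_t = 1/(μ t)` on `μ`-strongly convex losses. -/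
theorem ogd_regret_strongly_convex {n : ℕ} {T : ℕ}
    (f : ℕ → EuclideanSpace ℝ (Fin n) → ℝ) (g : ℕ → EuclideanSpace ℝ (Fin n) → EuclideanSpace ℝ (Fin n))
    (X : Set (EuclideanSpace ℝ (Fin n))) (hXne : X.Nonempty) (hXcl : IsClosed X)
    (hXconv : Convex ℝ X)
    (μ L : ℝ) (hμ : 0 < μ) (hT : 1 ≤ T)
    (hstrong : ∀ t x y, f t y ≥ f t x + ⟪g t x, y - x⟫ + μ / 2 * ‖y - x‖ ^ 2)
    (hgrad : ∀ t x, HasGradientAt (f t) (g t x) x)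
    (hgbound : ∀ t, ∀ x ∈ X, ‖g t x‖ ≤ L)
    (P : EuclideanSpace ℝ (Fin n) → EuclideanSpace ℝ (Fin n))
    (hP : ∀ z, P z ∈ X ∧ ∀ w ∈ X, ‖z - P z‖ ≤ ‖z - w‖)
    (x : ℕ → EuclideanSpace ℝ (Fin n)) (hx1 : x 1 ∈ X)
    (hupd : ∀ t, 1 ≤ t → x (t + 1) = P (x t - (1 / (μ * t)) • g t (x t)))
    (xstar : EuclideanSpace ℝ (Fin n)) (hxstar : xstar ∈ X) :
    ∑ t ∈ Icc 1 T, (f t (x t) - f t xstar) ≤ L ^ 2 / (2 * μ) * (1 + Real.log T) := by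
  have hL0 : 0 ≤ L := le_trans (norm_nonneg _) (hgbound 1 (x 1) hx1)
  set a : ℕ → ℝ := fun t => ‖x t - xstar‖ ^ 2 with ha
  -- projection decreases squared distance to points of X
  have hproj : ∀ z, ‖P z - xstar‖ ^ 2 ≤ ‖z - xstar‖ ^ 2 := by
    intro z
    obtain ⟨hPz, hPmin⟩ := hP z
    have hinf : ‖z - P z‖ = ⨅ w : X, ‖z - w‖ := by
      haveI : Nonempty X := ⟨⟨P z, hPz⟩⟩
      refine le_antisymm (le_ciInf fun w => hPmin w w.2) ?_
      exact ciInf_le ⟨0, fun r ⟨w, hw⟩ => hw ▸ norm_nonneg _⟩ (⟨P z, hPz⟩ : X)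
    have hip := (norm_eq_iInf_iff_real_inner_le_zero hXconv hPz).mp hinf xstar hxstar
    have hdecomp : z - xstar = (z - P z) + (P z - xstar) := by abel
    have hinner : ⟪z - P z, P z - xstar⟫ = -⟪z - P z, xstar - P z⟫ := by
      rw [← inner_neg_right]; congr 1; abel
    have := norm_add_sq_real (z - P z) (P z - xstar)
    rw [← hdecomp] at this
    nlinarith [sq_nonneg ‖z - P z‖]
  -- iterates stay in X
  have hmem : ∀ t, 1 ≤ t → x t ∈ X := by
    intro t ht
    induction t with
    | zero => omega
    | succ t ih =>
      rcases Nat.eq_zero_or_pos t with h0 | h0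
      · subst h0; exact hx1
      · rw [hupd t h0]; exact (hP _).1
  -- per-step inequality
  have hstep : ∀ t ∈ Icc 1 T,
      f t (x t) - f t xstar ≤
        μ / 2 * ((((t : ℝ)) - 1) * a t - (t : ℝ) * a (t + 1)) + L ^ 2 / (2 * μ) * ((t : ℝ))⁻¹ := by
    intro t htmem
    have ht : 1 ≤ t := (Finset.mem_Icc.mp htmem).1
    have hs : (1 : ℝ) ≤ (t : ℝ) := by exact_mod_cast ht
    have hs0 : (0 : ℝ) < t := by linarith
    have hμs : (0 : ℝ) < μ * t := by positivity
    set G := g t (x t) with hG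
    set η : ℝ := 1 / (μ * t) with hη
    have hη0 : 0 < η := by positivity
    have hNL : ‖G‖ ≤ L := hgbound t (x t) (hmem t ht)
    -- bound a(t+1)
    have hz : a (t + 1) ≤ a t - 2 * η * ⟪G, x t - xstar⟫ + η ^ 2 * ‖G‖ ^ 2 := by
      have h1 : a (t + 1) ≤ ‖(x t - η • G) - xstar‖ ^ 2 := by
        rw [ha]
        simp only
        rw [hupd t ht]
        exact hproj _
      have hrw : (x t - η • G) - xstar = (x t - xstar) - η • G := by abel
      rw [hrw] at h1
      have h2 := norm_sub_sq_real (x t - xstar) (η • G)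
      rw [real_inner_smul_right, norm_smul, Real.norm_eq_abs, abs_of_pos hη0,
        mul_pow] at h2
      have h3 : ⟪x t - xstar, G⟫ = ⟪G, x t - xstar⟫ := real_inner_comm _ _
      rw [h3] at h2
      calc a (t + 1) ≤ _ := h1
        _ = a t - 2 * η * ⟪G, x t - xstar⟫ + η ^ 2 * ‖G‖ ^ 2 := by rw [h2]; ring
    -- strong convexity
    have hsc : f t (x t) - f t xstar ≤ ⟪G, x t - xstar⟫ - μ / 2 * a t := by
      have := hstrong t (x t) xstar
      have h1 : ⟪G, xstar - x t⟫ = -⟪G, x t - xstar⟫ := by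
        rw [← inner_neg_right]; congr 1; abel
      have h2 : ‖xstar - x t‖ = ‖x t - xstar‖ := norm_sub_rev _ _
      rw [h1, h2] at this
      rw [show ‖x t - xstar‖ ^ 2 = a t from rfl] at this
      linarith
    -- combine, multiplying hz by μ t
    have hμη : μ * t * η = 1 := by rw [hη]; field_simp
    have hz' : μ * t * a (t + 1) ≤ μ * t * a t - 2 * ⟪G, x t - xstar⟫ + η * ‖G‖ ^ 2 := by
      have := mul_le_mul_of_nonneg_left hz (le_of_lt hμs)
      calc μ * t * a (t + 1) ≤ μ * t * (a t - 2 * η * ⟪G, x t - xstar⟫ + η ^ 2 * ‖G‖ ^ 2) := this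
        _ = μ * t * a t - 2 * (μ * t * η) * ⟪G, x t - xstar⟫ + (μ * t * η) * η * ‖G‖ ^ 2 := by ring
        _ = μ * t * a t - 2 * ⟪G, x t - xstar⟫ + η * ‖G‖ ^ 2 := by rw [hμη]; ring
    have hN2 : ‖G‖ ^ 2 ≤ L ^ 2 := by nlinarith [norm_nonneg G]
    have hηL : η * ‖G‖ ^ 2 ≤ η * L ^ 2 := mul_le_mul_of_nonneg_left hN2 hη0.le
    have hηeq : η * L ^ 2 / 2 = L ^ 2 / (2 * μ) * ((t : ℝ))⁻¹ := by
      rw [hη, one_div, mul_inv, div_eq_mul_inv, div_eq_mul_inv, mul_inv]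
      ring
    have key : f t (x t) - f t xstar ≤
        μ / 2 * ((((t : ℝ)) - 1) * a t - (t : ℝ) * a (t + 1)) + η * L ^ 2 / 2 := by
      linarith
    calc f t (x t) - f t xstar ≤ _ := key
      _ = μ / 2 * ((((t : ℝ)) - 1) * a t - (t : ℝ) * a (t + 1))
          + L ^ 2 / (2 * μ) * ((t : ℝ))⁻¹ := by rw [hηeq]
  -- sum everything
  have hsum := Finset.sum_le_sum hstep
  have hsplit : ∑ t ∈ Icc 1 T,
      (μ / 2 * ((((t : ℝ)) - 1) * a t - (t : ℝ) * a (t + 1)) + L ^ 2 / (2 * μ) * ((t : ℝ))⁻¹)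
      = μ / 2 * (∑ t ∈ Icc 1 T, ((((t : ℝ)) - 1) * a t - (t : ℝ) * a (t + 1)))
        + L ^ 2 / (2 * μ) * ∑ t ∈ Icc 1 T, ((t : ℝ))⁻¹ := by
    rw [Finset.sum_add_distrib, Finset.mul_sum, Finset.mul_sum]
  have htel : ∑ t ∈ Icc 1 T, ((((t : ℝ)) - 1) * a t - (t : ℝ) * a (t + 1))
      = (((1 : ℕ) : ℝ) - 1) * a 1 - (((T + 1 : ℕ) : ℝ) - 1) * a (T + 1) := by
    have := ogd_telescope (fun t => ((t : ℝ) - 1) * a t) T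
    rw [← this]
    apply Finset.sum_congr rfl
    intro t _
    push_cast
    ring
  have htel0 : ∑ t ∈ Icc 1 T, ((((t : ℝ)) - 1) * a t - (t : ℝ) * a (t + 1)) ≤ 0 := by
    rw [htel]
    push_cast
    have : 0 ≤ (T : ℝ) * a (T + 1) := by
      apply mul_nonneg (Nat.cast_nonneg T)
      exact sq_nonneg _
    nlinarith
  have hcoef : 0 ≤ L ^ 2 / (2 * μ) := by positivity
  calc ∑ t ∈ Icc 1 T, (f t (x t) - f t xstar) ≤ _ := hsum
    _ = μ / 2 * (∑ t ∈ Icc 1 T, ((((t : ℝ)) - 1) * a t - (t : ℝ) * a (t + 1)))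
        + L ^ 2 / (2 * μ) * ∑ t ∈ Icc 1 T, ((t : ℝ))⁻¹ := hsplit
    _ ≤ 0 + L ^ 2 / (2 * μ) * (1 + Real.log T) := by
      apply add_le_add
      · exact mul_nonpos_of_nonneg_of_nonpos (by positivity) htel0
      · exact mul_le_mul_of_nonneg_left (ogd_harmonic T) hcoef
    _ = L ^ 2 / (2 * μ) * (1 + Real.log T) := by ring
end
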